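/- In the infinitesimal Hopf algebra H of planar forests, for every nonempty forest F and tree t: Δ(F ↘ t) = (F ↘ t) ⊗ 1 + 1 ⊗ (F ↘ t) + F′ ⊗ (F″ ↘ t) + F·t′ ⊗ t″ + F ⊗ t, where Δ̃(F) = F′⊗F″ and Δ̃(t) = t′⊗t″ are the reduced coproducts (Sweedler notation). -/

import Mathlib

open scoped TensorProduct

/-- Planar rooted trees; `PTree.node []` is the single-vertex tree `•`. -/
inductive PTree : Type
  | node : List PTree → PTree

/-- Planar rooted forests. -/
abbrev Forest : Type := List PTree

instance : Monoid Forest where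
  mul := fun x y => List.append x y
  one := ([] : List PTree)
  mul_assoc := List.append_assoc
  one_mul := fun _ => rfl
  mul_one := List.append_nil

/-- The infinitesimal Hopf algebra `H` of planar rooted forests: the span of forests,
with concatenation product. -/
abbrev H : Type := MonoidAlgebra ℚ Forest

/-- The basis element of `H` indexed by a forest. -/
noncomputable def bf (F : Forest) : H := MonoidAlgebra.of ℚ Forest F

/-- The operator `B⁺` grafting a forest on a common new root, extended linearly. -/
noncomputable def Bplus : H →ₗ[ℚ] H :=
  (Finsupp.lift H ℚ Forest fun F => bf [PTree.node F]) ∘ₗ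
    (MonoidAlgebra.coeffLinearEquiv ℚ).toLinearMap

/-- Grafting on the root: `F ↘ G` grafts `F` on the left of the root of the first tree
of `G`. -/
def graftRoot (F : Forest) : Forest → Forest
  | [] => F
  | .node c :: rest => .node (F ++ c) :: rest

/-- The product `↘` extended bilinearly to `H`. -/
noncomputable def grH : H →ₗ[ℚ] H →ₗ[ℚ] H :=
  (Finsupp.lift (H →ₗ[ℚ] H) ℚ Forest fun F =>
    (Finsupp.lift H ℚ Forest fun G => bf (graftRoot F G)) ∘ₗ
      (MonoidAlgebra.coeffLinearEquiv ℚ).toLinearMap) ∘ₗ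
    (MonoidAlgebra.coeffLinearEquiv ℚ).toLinearMap

/-!
A tree is `t = B⁺(c)` and `F ↘ t = B⁺(F·c)`. Expanding `Δ(B⁺(F·c))` by the cocycle relation
for `B⁺` and then `Δ(F·c)` by the infinitesimal Leibniz rule, the terms `(id ⊗ B⁺)((F ⊗ 1)·Δc)`
reassemble, by the cocycle relation read backwards, into `(F ⊗ 1)·Δt`, while
`(id ⊗ B⁺)(ΔF·(1 ⊗ c))` is `(id ⊗ (· ↘ t))(ΔF)`, since `x ↘ B⁺(c) = B⁺(x·c)`.
Splitting `ΔF` and `Δt` into primitive and reduced parts gives the formula.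
-/

section TensorAlgebra

variable {R A B : Type*} [CommSemiring R] [Semiring A] [Semiring B] [Algebra R A] [Algebra R B]

theorem tmul_one_mul_eq_rTensor_mulLeft (a : A) (z : A ⊗[R] B) :
    (a ⊗ₜ[R] (1 : B)) * z = (LinearMap.mulLeft R a).rTensor B z := by
  rw [← LinearMap.mulLeft_apply (R := R), LinearMap.mulLeft_tmul, LinearMap.mulLeft_one]
  rfl

theorem mul_one_tmul_eq_lTensor_mulRight (b : B) (z : A ⊗[R] B) :
    z * ((1 : A) ⊗ₜ[R] b) = (LinearMap.mulRight R b).lTensor A z := by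
  rw [← LinearMap.mulRight_apply (R := R), LinearMap.mulRight_tmul, LinearMap.mulRight_one]
  rfl

end TensorAlgebra

theorem LinearMap.lTensor_rTensor_comm_apply {R M N P Q : Type*} [CommSemiring R]
    [AddCommMonoid M] [AddCommMonoid N] [AddCommMonoid P] [AddCommMonoid Q]
    [Module R M] [Module R N] [Module R P] [Module R Q]
    (f : M →ₗ[R] P) (g : N →ₗ[R] Q) (x : M ⊗[R] N) :
    g.lTensor P (f.rTensor N x) = f.rTensor Q (g.lTensor M x) :=
  LinearMap.congr_fun ((lTensor_comp_rTensor (f := f) (g := g)).trans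
    (rTensor_comp_lTensor (f := f) (g := g)).symm) x

theorem bf_append (F G : Forest) : bf (F ++ G) = bf F * bf G :=
  (MonoidAlgebra.of ℚ Forest).map_mul F G

theorem Bplus_bf (F : Forest) : Bplus (bf F) = bf [PTree.node F] := by
  simp [Bplus, bf, MonoidAlgebra.coeff_single]

theorem grH_bf_bf (F G : Forest) : grH (bf F) (bf G) = bf (graftRoot F G) := by
  simp [grH, bf, MonoidAlgebra.coeff_single]

theorem bf_graftRoot_node (F c : Forest) :
    bf (graftRoot F [PTree.node c]) = Bplus (bf F * bf c) := by
  rw [← bf_append, Bplus_bf]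
  rfl

theorem grH_flip_bf_node (c : Forest) :
    grH.flip (bf [PTree.node c]) = Bplus ∘ₗ LinearMap.mulRight ℚ (bf c) := by
  refine MonoidAlgebra.lhom_ext' fun F => LinearMap.ext_ring ?_
  exact (grH_bf_bf F _).trans (bf_graftRoot_node F c)

theorem coproduct_graftRoot_general (Δ : H →ₗ[ℚ] H ⊗[ℚ] H)
    (hΔm : ∀ x y : H, Δ (x * y) = (x ⊗ₜ (1 : H)) * Δ y + Δ x * ((1 : H) ⊗ₜ y) - x ⊗ₜ y)
    (hΔB : ∀ x : H, Δ (Bplus x) = (Bplus x) ⊗ₜ 1 + (LinearMap.lTensor H Bplus) (Δ x))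
    (F : Forest) (t : PTree) :
    Δ (bf (graftRoot F [t])) =
      bf (graftRoot F [t]) ⊗ₜ 1 + 1 ⊗ₜ bf (graftRoot F [t]) +
        (LinearMap.lTensor H (grH.flip (bf [t])))
          (Δ (bf F) - bf F ⊗ₜ 1 - 1 ⊗ₜ bf F) +
        (LinearMap.rTensor H (LinearMap.mulLeft ℚ (bf F)))
          (Δ (bf [t]) - bf [t] ⊗ₜ 1 - 1 ⊗ₜ bf [t]) +
        bf F ⊗ₜ bf [t] := by
  obtain ⟨c⟩ := t
  rw [bf_graftRoot_node, hΔB, hΔm, grH_flip_bf_node, ← Bplus_bf c, hΔB,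
    tmul_one_mul_eq_rTensor_mulLeft, mul_one_tmul_eq_lTensor_mulRight]
  simp only [map_add, map_sub, LinearMap.lTensor_comp_apply, LinearMap.comp_apply,
    LinearMap.lTensor_rTensor_comm_apply, LinearMap.lTensor_tmul, LinearMap.rTensor_tmul,
    LinearMap.mulLeft_apply, LinearMap.mulRight_apply, one_mul, mul_one]
  abel

/-- For the left-admissible-cut coproduct `Δ` of the infinitesimal Hopf algebra `H`
(characterized by `Δ(1) = 1⊗1`, the infinitesimal compatibility with the concatenation
product, and `Δ∘B⁺ = B⁺⊗1 + (id⊗B⁺)∘Δ`), one has, for every nonempty forest `F` and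
every tree `t`:
`Δ(F ↘ t) = (F↘t)⊗1 + 1⊗(F↘t) + F′⊗(F″↘t) + F·t′⊗t″ + F⊗t`,
where `Δ̃(x) = Δ(x) − x⊗1 − 1⊗x` is the reduced coproduct (Sweedler notation). -/
theorem coproduct_graftRoot (Δ : H →ₗ[ℚ] H ⊗[ℚ] H)
    (hΔ1 : Δ 1 = 1 ⊗ₜ 1)
    (hΔm : ∀ x y : H, Δ (x * y) = (x ⊗ₜ (1 : H)) * Δ y + Δ x * ((1 : H) ⊗ₜ y) - x ⊗ₜ y)
    (hΔB : ∀ x : H, Δ (Bplus x) = (Bplus x) ⊗ₜ 1 + (LinearMap.lTensor H Bplus) (Δ x))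
    (F : Forest) (hF : F ≠ []) (t : PTree) :
    Δ (bf (graftRoot F [t])) =
      bf (graftRoot F [t]) ⊗ₜ 1 + 1 ⊗ₜ bf (graftRoot F [t]) +
        (LinearMap.lTensor H (grH.flip (bf [t])))
          (Δ (bf F) - bf F ⊗ₜ 1 - 1 ⊗ₜ bf F) +
        (LinearMap.rTensor H (LinearMap.mulLeft ℚ (bf F)))
          (Δ (bf [t]) - bf [t] ⊗ₜ 1 - 1 ⊗ₜ bf [t]) +
        bf F ⊗ₜ bf [t] :=
  coproduct_graftRoot_general Δ hΔm hΔB F t
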